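/- For a simple graph G on n vertices, mr^-(G) = n = MR^-(G) if and only if G has a unique perfect matching. -/

import Mathlib

open Matrix SimpleGraph

attribute [local instance] Classical.propDecidable

/-- The set of real skew-symmetric matrices whose off-diagonal zero-nonzero
pattern is described by the graph `G`. -/
def IsSkewRep {V : Type*} [Fintype V] (G : SimpleGraph V) (A : Matrix V V ℝ) : Prop :=
  Aᵀ = -A ∧ ∀ i j, i ≠ j → (A i j ≠ 0 ↔ G.Adj i j)

/-- The minimum skew rank of a simple graph. -/
noncomputable def minSkewRank {V : Type*} [Fintype V] (G : SimpleGraph V) : ℕ :=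
  sInf {r | ∃ A : Matrix V V ℝ, IsSkewRep G A ∧ A.rank = r}

/-- The maximum skew rank of a simple graph. -/
noncomputable def maxSkewRank {V : Type*} [Fintype V] (G : SimpleGraph V) : ℕ :=
  sSup {r | ∃ A : Matrix V V ℝ, IsSkewRep G A ∧ A.rank = r}

/-- The matching number of a simple graph. -/
noncomputable def matchNum {V : Type*} [Fintype V] (G : SimpleGraph V) : ℕ :=
  sSup {n | ∃ M : G.Subgraph, M.IsMatching ∧ M.edgeSet.ncard = n}

/-!
If `A` represents `G` and `det A ≠ 0`, expanding `(A * A⁻¹) u u = 1` gives a neighbour `v` of `u`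
with `A⁻¹ u v ≠ 0`; by Jacobi's identity the principal minor `A_W` on `W = {u, v}ᶜ` is then
invertible, and induction produces a perfect matching.

When `A_W` is invertible, the Schur complement of the `{u, v}` block is a skew `2 × 2` matrix, so
`det A = det A_W * (A u v + c) ^ 2` with `c` independent of `A u v`. If `G` has a unique perfect
matching `μ`, then `G` minus the edge `u — μ u` has none, which forces `c = 0`; by induction every
representation is nonsingular. If `G` has two perfect matchings, pick an edge `u — v` of one that
the other avoids: a generic representation `N` of `G` minus that edge has `det N ≠ 0` and
`det N_W ≠ 0`, so `c ≠ 0`, and the entry `-c` at `u — v` gives a singular representation of `G`.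
-/

theorem Set.mem_compl_pair_iff {V : Type*} {u v x : V} :
    x ∈ ({u, v}ᶜ : Set V) ↔ x ≠ u ∧ x ≠ v := by
  simp

namespace Matrix

section Determinant

variable {m n R : Type*} [Fintype m] [Fintype n] [DecidableEq m] [DecidableEq n] [CommRing R]

theorem det_mul_det_toBlocks₂₂_inv (M : Matrix (m ⊕ n) (m ⊕ n) R) (hM : IsUnit M.det) :
    M.det * M⁻¹.toBlocks₂₂.det = M.toBlocks₁₁.det := by
  have hblocks := M.mul_nonsing_inv hM
  set P := M⁻¹
  rw [← fromBlocks_toBlocks M, ← fromBlocks_toBlocks P, fromBlocks_multiply, ← fromBlocks_one,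
    fromBlocks_inj] at hblocks
  have key : M * fromBlocks 1 P.toBlocks₁₂ 0 P.toBlocks₂₂ =
      fromBlocks M.toBlocks₁₁ 0 M.toBlocks₂₁ 1 := by
    conv_lhs => rw [← fromBlocks_toBlocks M]
    rw [fromBlocks_multiply]
    simp [hblocks.2.1, hblocks.2.2.2]
  simpa [det_fromBlocks_zero₂₁, det_fromBlocks_zero₁₂] using congr_arg det key

theorem det_ne_zero_of_involutive [IsDomain R] {M : Matrix n n R} {μ : n → n}
    (hμ : Function.Involutive μ) (hzero : ∀ i j, j ≠ μ i → M i j = 0)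
    (hne : ∀ i, M i (μ i) ≠ 0) : M.det ≠ 0 := by
  have hdiag : M.submatrix id hμ.toPerm = diagonal fun i => M i (μ i) := by
    ext i j
    by_cases hij : i = j
    · simp [hij]
    · simp [diagonal_apply_ne _ hij, hzero i, hμ.injective.ne (Ne.symm hij)]
  have hdet := det_permute' hμ.toPerm M
  rw [hdiag, det_diagonal] at hdet
  intro h
  rw [h, mul_zero] at hdet
  exact Finset.prod_ne_zero_iff.mpr (fun i _ => hne i) hdet

theorem rank_eq_card_iff_det_ne_zero {K : Type*} [Field K] {A : Matrix n n K} :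
    A.rank = Fintype.card n ↔ A.det ≠ 0 := by
  refine ⟨fun h => ?_, rank_of_det_ne_zero⟩
  rw [← isUnit_iff_ne_zero, ← isUnit_iff_isUnit_det, ← linearIndependent_rows_iff_isUnit,
    linearIndependent_iff_card_eq_finrank_span, Set.finrank, ← rank_eq_finrank_span_row, h]

end Determinant

section Skew

variable {ι K : Type*} [Field K] {A : Matrix ι ι K}

theorem apply_eq_neg_of_transpose_eq_neg (hA : Aᵀ = -A) (i j : ι) : A j i = -A i j := by
  simpa using congr_fun₂ hA i j

theorem diag_eq_zero_of_transpose_eq_neg [CharZero K] (hA : Aᵀ = -A) (i : ι) : A i i = 0 :=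
  self_eq_neg.mp (apply_eq_neg_of_transpose_eq_neg hA i i)

theorem transpose_inv_eq_neg [Fintype ι] [DecidableEq ι] (hA : Aᵀ = -A) (hdet : IsUnit A.det) :
    A⁻¹ᵀ = -A⁻¹ := by
  rw [transpose_nonsing_inv, hA]
  exact inv_eq_left_inv (by rw [neg_mul_neg, nonsing_inv_mul _ hdet])

theorem det_fin_two_of_transpose_eq_neg [CharZero K] {M : Matrix (Fin 2) (Fin 2) K}
    (hM : Mᵀ = -M) : M.det = M 0 1 ^ 2 := by
  rw [det_fin_two, diag_eq_zero_of_transpose_eq_neg hM, apply_eq_neg_of_transpose_eq_neg hM 0 1]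
  ring

theorem transpose_schur_eq_neg {m n : Type*} [Fintype m] [DecidableEq m]
    {A : Matrix m m K} {B : Matrix m n K} {C : Matrix n m K} {D : Matrix n n K}
    (h : (fromBlocks A B C D)ᵀ = -fromBlocks A B C D) (hA : IsUnit A.det) :
    (D - C * A⁻¹ * B)ᵀ = -(D - C * A⁻¹ * B) := by
  rw [fromBlocks_transpose, fromBlocks_neg, fromBlocks_inj] at h
  obtain ⟨hAA, hCB, hBC, hDD⟩ := h
  rw [transpose_sub, transpose_mul, transpose_mul, transpose_inv_eq_neg hAA hA, hDD, hCB, hBC]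
  simp only [Matrix.neg_mul, Matrix.mul_neg, neg_neg, neg_sub', Matrix.mul_assoc]

end Skew

section Pair

variable {V α K : Type*} {u v : V}

noncomputable def sumPairEquiv (huv : u ≠ v) : ({u, v}ᶜ : Set V) ⊕ Fin 2 ≃ V :=
  Equiv.ofBijective (Sum.elim (↑) ![u, v]) <| by
    refine ⟨Subtype.val_injective.sumElim ?_ ?_, fun x => ?_⟩
    · intro i j h
      fin_cases i <;> fin_cases j <;> simp_all [eq_comm]
    · intro w i
      have hw := Set.mem_compl_pair_iff.mp w.2
      fin_cases i <;> simp [hw.1, hw.2]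
    · by_cases hxu : x = u
      · exact ⟨Sum.inr 0, by simp [hxu]⟩
      by_cases hxv : x = v
      · exact ⟨Sum.inr 1, by simp [hxv]⟩
      exact ⟨Sum.inl ⟨x, by simp [hxu, hxv]⟩, rfl⟩

@[simp]
theorem sumPairEquiv_inl (huv : u ≠ v) (w : ({u, v}ᶜ : Set V)) :
    sumPairEquiv huv (.inl w) = w :=
  rfl

@[simp]
theorem sumPairEquiv_inr_zero (huv : u ≠ v) : sumPairEquiv huv (.inr 0) = u :=
  rfl

@[simp]
theorem sumPairEquiv_inr_one (huv : u ≠ v) : sumPairEquiv huv (.inr 1) = v :=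
  rfl

def deletePair (A : Matrix V V α) (u v : V) : Matrix ({u, v}ᶜ : Set V) ({u, v}ᶜ : Set V) α :=
  A.submatrix (↑) (↑)

noncomputable def updateSkew [Neg α] (A : Matrix V V α) (u v : V) (y : α) : Matrix V V α :=
  of fun i j => if i = u ∧ j = v then y else if i = v ∧ j = u then -y else A i j

variable [Field K]

theorem updateSkew_apply_of_left_notMem {A : Matrix V V K} {i : V} (hi : i ∈ ({u, v}ᶜ : Set V))
    (j : V) (y : K) : A.updateSkew u v y i j = A i j := by
  simp_all [updateSkew]

theorem updateSkew_apply_of_right_notMem {A : Matrix V V K} {j : V} (hj : j ∈ ({u, v}ᶜ : Set V))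
    (i : V) (y : K) : A.updateSkew u v y i j = A i j := by
  simp_all [updateSkew]

theorem updateSkew_self {A : Matrix V V K} (hA : Aᵀ = -A) : A.updateSkew u v (A u v) = A := by
  ext i j
  simp only [updateSkew, of_apply]
  split_ifs with h₁ h₂
  · rw [h₁.1, h₁.2]
  · rw [h₂.1, h₂.2, apply_eq_neg_of_transpose_eq_neg hA u v]
  · rfl

theorem transpose_updateSkew (huv : u ≠ v) {A : Matrix V V K} (hA : Aᵀ = -A) (y : K) :
    (A.updateSkew u v y)ᵀ = -A.updateSkew u v y := by
  ext i j
  simp only [updateSkew, transpose_apply, neg_apply, of_apply]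
  split_ifs <;> simp_all [apply_eq_neg_of_transpose_eq_neg hA j i]

variable [Fintype V] [DecidableEq V] [CharZero K]

theorem det_deletePair (huv : u ≠ v) {A : Matrix V V K} (hA : Aᵀ = -A) (hdet : A.det ≠ 0) :
    (A.deletePair u v).det = A.det * A⁻¹ u v ^ 2 := by
  set e := sumPairEquiv huv
  have hB : IsUnit (A.submatrix e e).det := by
    rw [det_submatrix_equiv_self]
    exact hdet.isUnit
  have hskew :
      (A⁻¹.submatrix e e).toBlocks₂₂ᵀ = -(A⁻¹.submatrix e e).toBlocks₂₂ := by
    have := transpose_inv_eq_neg hA hdet.isUnit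
    ext i j
    exact congr_fun₂ this (e (Sum.inr i)) (e (Sum.inr j))
  have hjacobi := det_mul_det_toBlocks₂₂_inv (A.submatrix e e) hB
  rw [det_submatrix_equiv_self, inv_submatrix_equiv,
    det_fin_two_of_transpose_eq_neg hskew] at hjacobi
  exact hjacobi.symm

theorem exists_det_updateSkew_eq (huv : u ≠ v) {A : Matrix V V K} (hA : Aᵀ = -A)
    (hW : (A.deletePair u v).det ≠ 0) :
    ∃ c, ∀ y, (A.updateSkew u v y).det = (A.deletePair u v).det * (y + c) ^ 2 := by
  set e := sumPairEquiv huv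
  set M := fun y => (A.updateSkew u v y).submatrix e e
  have hM : ∀ y, (M y)ᵀ = -M y := fun y => by
    rw [transpose_submatrix, transpose_updateSkew huv hA]
    rfl
  have h₁₁ : ∀ y, (M y).toBlocks₁₁ = A.deletePair u v := fun y => by
    ext w w'
    exact updateSkew_apply_of_left_notMem w.2 _ y
  have h₁₂ : ∀ y, (M y).toBlocks₁₂ = (M 0).toBlocks₁₂ := fun y => by
    ext w k
    simp only [M, e, toBlocks₁₂, of_apply, submatrix_apply, sumPairEquiv_inl,
      updateSkew_apply_of_left_notMem w.2]
  have h₂₁ : ∀ y, (M y).toBlocks₂₁ = (M 0).toBlocks₂₁ := fun y => by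
    ext k w
    simp only [M, e, toBlocks₂₁, of_apply, submatrix_apply, sumPairEquiv_inl,
      updateSkew_apply_of_right_notMem w.2]
  have h₂₂ : ∀ y, (M y).toBlocks₂₂ 0 1 = y := fun y => by
    simp [M, e, toBlocks₂₂, updateSkew]
  let := invertibleOfIsUnitDet _ hW.isUnit
  -- The blocks of `M y` other than the `{u, v}` block do not depend on `y`.
  set S := (M 0).toBlocks₂₁ * (A.deletePair u v)⁻¹ * (M 0).toBlocks₁₂
  refine ⟨-S 0 1, fun y => ?_⟩
  have hblocks : M y = fromBlocks (A.deletePair u v) (M 0).toBlocks₁₂ (M 0).toBlocks₂₁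
      (M y).toBlocks₂₂ := by
    rw [← h₁₁ y, ← h₁₂ y, ← h₂₁ y, fromBlocks_toBlocks]
  have hschur := transpose_schur_eq_neg (hblocks ▸ hM y) hW.isUnit
  calc (A.updateSkew u v y).det = (M y).det := (det_submatrix_equiv_self e _).symm
    _ = (A.deletePair u v).det * ((M y).toBlocks₂₂ - S).det := by
      conv_lhs => rw [hblocks]
      rw [det_fromBlocks₁₁, invOf_eq_nonsing_inv]
    _ = (A.deletePair u v).det * (y + -S 0 1) ^ 2 := by
      rw [det_fin_two_of_transpose_eq_neg hschur, sub_apply, h₂₂, sub_eq_add_neg]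

end Pair

end Matrix

namespace SimpleGraph

variable {V : Type*} {G H : SimpleGraph V} {μ : V → V}

/-- A perfect matching, encoded as the involution sending each vertex to its partner. -/
def IsMatchingInvolution (G : SimpleGraph V) (μ : V → V) : Prop :=
  Function.Involutive μ ∧ ∀ v, G.Adj v (μ v)

def subgraphOfFun (G : SimpleGraph V) (μ : V → V) : G.Subgraph where
  verts := Set.univ
  Adj a b := G.Adj a b ∧ (μ a = b ∨ μ b = a)
  adj_sub h := h.1
  edge_vert _ := Set.mem_univ _
  symm := ⟨fun _ _ h => ⟨h.1.symm, h.2.symm⟩⟩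

namespace IsMatchingInvolution

theorem ne (hμ : G.IsMatchingInvolution μ) (v : V) : μ v ≠ v :=
  (hμ.2 v).ne'

theorem mono (hμ : G.IsMatchingInvolution μ) (hGH : G ≤ H) : H.IsMatchingInvolution μ :=
  ⟨hμ.1, fun v => hGH (hμ.2 v)⟩

theorem subgraphOfFun_adj (hμ : G.IsMatchingInvolution μ) {a b : V} :
    (G.subgraphOfFun μ).Adj a b ↔ μ a = b := by
  change G.Adj a b ∧ (μ a = b ∨ μ b = a) ↔ μ a = b
  exact ⟨fun h => h.2.elim id fun h => h ▸ hμ.1 b, fun h => ⟨h ▸ hμ.2 a, .inl h⟩⟩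

theorem isPerfectMatching (hμ : G.IsMatchingInvolution μ) :
    (G.subgraphOfFun μ).IsPerfectMatching :=
  Subgraph.isPerfectMatching_iff.mpr fun v => ⟨μ v, hμ.subgraphOfFun_adj.mpr rfl,
    fun _ h => (hμ.subgraphOfFun_adj.mp h).symm⟩

theorem subgraphOfFun_injective {μ' : V → V} (hμ : G.IsMatchingInvolution μ)
    (hμ' : G.IsMatchingInvolution μ') (h : G.subgraphOfFun μ = G.subgraphOfFun μ') : μ = μ' :=
  funext fun _ => (hμ'.subgraphOfFun_adj.mp (h ▸ hμ.subgraphOfFun_adj.mpr rfl)).symm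

theorem exists_restrict (hμ : G.IsMatchingInvolution μ) (u : V) :
    ∃ ν, (G.induce {u, μ u}ᶜ).IsMatchingInvolution ν := by
  refine ⟨fun w => ⟨μ w, ?_⟩, fun w => Subtype.ext (hμ.1 w), fun w => hμ.2 w⟩
  obtain ⟨hwu, hwv⟩ := Set.mem_compl_pair_iff.mp w.2
  exact Set.mem_compl_pair_iff.mpr
    ⟨fun h => hwv ((hμ.1 w).symm.trans (congrArg μ h)), fun h => hwu (hμ.1.injective h)⟩

theorem exists_extend {u v : V} (huv : G.Adj u v) {ν : ({u, v}ᶜ : Set V) → ({u, v}ᶜ : Set V)}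
    (hν : (G.induce {u, v}ᶜ).IsMatchingInvolution ν) :
    ∃ μ, G.IsMatchingInvolution μ ∧ ∀ w : ({u, v}ᶜ : Set V), μ w = ν w := by
  let μ : V → V := fun x =>
    if hx : x ∈ ({u, v}ᶜ : Set V) then ν ⟨x, hx⟩ else Equiv.swap u v x
  have hμW : ∀ w : ({u, v}ᶜ : Set V), μ w = ν w := fun w => dif_pos w.2
  have hμuv : ∀ x ∉ ({u, v}ᶜ : Set V), μ x = Equiv.swap u v x := fun x hx => dif_neg hx
  refine ⟨μ, ⟨fun x => ?_, fun x => ?_⟩, hμW⟩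
  all_goals by_cases hx : x ∈ ({u, v}ᶜ : Set V)
  · rw [show x = (⟨x, hx⟩ : ({u, v}ᶜ : Set V)) from rfl, hμW, hμW, hν.1]
  · have hx' : Equiv.swap u v x ∉ ({u, v}ᶜ : Set V) := by
      obtain rfl | rfl : x = u ∨ x = v := by simpa [or_iff_not_imp_left] using hx
      all_goals simp
    rw [hμuv x hx, hμuv _ hx', Equiv.swap_apply_self]
  · rw [show x = (⟨x, hx⟩ : ({u, v}ᶜ : Set V)) from rfl, hμW]
    simpa using hν.2 ⟨x, hx⟩
  · rw [hμuv x hx]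
    obtain rfl | rfl : x = u ∨ x = v := by simpa [or_iff_not_imp_left] using hx
    · simpa using huv
    · simpa using huv.symm

end IsMatchingInvolution

theorem Subgraph.IsPerfectMatching.exists_isMatchingInvolution {M : G.Subgraph}
    (hM : M.IsPerfectMatching) : ∃ μ, G.IsMatchingInvolution μ ∧ G.subgraphOfFun μ = M := by
  choose μ hμ huniq using Subgraph.isPerfectMatching_iff.mp hM
  have hinv : Function.Involutive μ := fun v => (huniq _ _ (hμ v).symm).symm
  refine ⟨μ, ⟨hinv, fun v => M.adj_sub (hμ v)⟩, ?_⟩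
  ext a b
  · exact iff_of_true (Set.mem_univ a) (hM.2 a)
  · rw [IsMatchingInvolution.subgraphOfFun_adj ⟨hinv, fun v => M.adj_sub (hμ v)⟩]
    exact ⟨fun h => h ▸ hμ a, fun h => (huniq a b h).symm⟩

theorem existsUnique_isPerfectMatching_iff :
    (∃! M : G.Subgraph, M.IsPerfectMatching) ↔ ∃! μ, G.IsMatchingInvolution μ := by
  constructor
  · rintro ⟨M, hM, huniq⟩
    obtain ⟨μ, hμ, rfl⟩ := hM.exists_isMatchingInvolution
    exact ⟨μ, hμ, fun μ' hμ' =>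
      hμ'.subgraphOfFun_injective hμ (huniq _ hμ'.isPerfectMatching)⟩
  · rintro ⟨μ, hμ, huniq⟩
    refine ⟨_, hμ.isPerfectMatching, fun M hM => ?_⟩
    obtain ⟨μ', hμ', rfl⟩ := hM.exists_isMatchingInvolution
    rw [huniq μ' hμ']

end SimpleGraph

section SkewRep

variable {V : Type*} [Fintype V] [DecidableEq V] {G : SimpleGraph V} {A : Matrix V V ℝ} {u v : V}

theorem card_compl_pair_lt (u v : V) : Fintype.card ({u, v}ᶜ : Set V) < Fintype.card V :=
  Fintype.card_subtype_lt (x := u) (by simp)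

theorem IsSkewRep.deletePair (hA : IsSkewRep G A) (u v : V) :
    IsSkewRep (G.induce {u, v}ᶜ) (A.deletePair u v) :=
  ⟨by ext i j; exact congr_fun₂ hA.1 i j,
    fun i j hij => hA.2 i j (Subtype.coe_ne_coe.mpr hij)⟩

theorem IsSkewRep.updateSkew_zero (hA : IsSkewRep G A) (huv : u ≠ v) :
    IsSkewRep (G.deleteEdges {s(u, v)}) (A.updateSkew u v 0) := by
  refine ⟨transpose_updateSkew huv hA.1 0, fun i j hij => ?_⟩
  rw [deleteEdges_adj, ← hA.2 i j hij]
  by_cases h : s(i, j) = s(u, v)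
  · rw [Sym2.eq_iff] at h
    rcases h with ⟨rfl, rfl⟩ | ⟨rfl, rfl⟩ <;> simp [updateSkew, huv.symm]
  · have h' : ¬(i = u ∧ j = v) ∧ ¬(i = v ∧ j = u) := by simpa [Sym2.eq_iff, not_or] using h
    simp [updateSkew, h'.1, h'.2, h]

theorem IsSkewRep.updateSkew_of_ne_zero (hA : IsSkewRep (G.deleteEdges {s(u, v)}) A)
    (huv : G.Adj u v) {y : ℝ} (hy : y ≠ 0) : IsSkewRep G (A.updateSkew u v y) := by
  refine ⟨transpose_updateSkew huv.ne hA.1 y, fun i j hij => ?_⟩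
  by_cases h : s(i, j) = s(u, v)
  · rw [Sym2.eq_iff] at h
    rcases h with ⟨rfl, rfl⟩ | ⟨rfl, rfl⟩ <;>
      simp [updateSkew, huv.ne.symm, hy, huv, huv.symm]
  · have h' : ¬(i = u ∧ j = v) ∧ ¬(i = v ∧ j = u) := by simpa [Sym2.eq_iff, not_or] using h
    simp [updateSkew, h'.1, h'.2, hA.2 i j hij, h]

theorem IsSkewRep.exists_isMatchingInvolution (hA : IsSkewRep G A) (hdet : A.det ≠ 0) :
    ∃ μ, G.IsMatchingInvolution μ := by
  induction hn : Fintype.card V using Nat.strong_induction_on generalizing V with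
  | _ n ih =>
  cases isEmpty_or_nonempty V
  · exact ⟨id, fun _ => rfl, isEmptyElim⟩
  obtain ⟨u⟩ := ‹Nonempty V›
  obtain ⟨v, -, hv⟩ : ∃ v ∈ Finset.univ, A u v * A⁻¹ v u ≠ 0 := by
    apply Finset.exists_ne_zero_of_sum_ne_zero
    rw [← mul_apply, mul_nonsing_inv _ hdet.isUnit, one_apply_eq]
    exact one_ne_zero
  have huv : u ≠ v := by
    rintro rfl
    exact hv (by rw [diag_eq_zero_of_transpose_eq_neg hA.1, zero_mul])
  have hW : (A.deletePair u v).det ≠ 0 := by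
    rw [det_deletePair huv hA.1 hdet, ← neg_sq,
      ← apply_eq_neg_of_transpose_eq_neg (transpose_inv_eq_neg hA.1 hdet.isUnit)]
    exact mul_ne_zero hdet (pow_ne_zero 2 (right_ne_zero_of_mul hv))
  obtain ⟨ν, hν⟩ := ih _ (hn ▸ card_compl_pair_lt u v) (hA.deletePair u v) hW rfl
  obtain ⟨μ, hμ, -⟩ := hν.exists_extend ((hA.2 u v huv).mp (left_ne_zero_of_mul hv))
  exact ⟨μ, hμ⟩

theorem IsSkewRep.det_ne_zero_of_existsUnique (hA : IsSkewRep G A)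
    (h : ∃! μ, G.IsMatchingInvolution μ) : A.det ≠ 0 := by
  induction hn : Fintype.card V using Nat.strong_induction_on generalizing V with
  | _ n ih =>
  cases isEmpty_or_nonempty V
  · simp [det_isEmpty]
  obtain ⟨u⟩ := ‹Nonempty V›
  obtain ⟨μ, hμ, huniq⟩ := h
  have huv : G.Adj u (μ u) := hμ.2 u
  have hW : (A.deletePair u (μ u)).det ≠ 0 := by
    refine ih _ (hn ▸ card_compl_pair_lt u _) (hA.deletePair u (μ u)) ?_ rfl
    obtain ⟨ν, hν⟩ := hμ.exists_restrict u
    refine ⟨ν, hν, fun ν' hν' => funext fun w => Subtype.ext ?_⟩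
    obtain ⟨μ', hμ', hμ'ν'⟩ := hν'.exists_extend huv
    obtain ⟨μ'', hμ'', hμ''ν⟩ := hν.exists_extend huv
    rw [← hμ'ν', ← hμ''ν, huniq μ' hμ', huniq μ'' hμ'']
  obtain ⟨c, hc⟩ := exists_det_updateSkew_eq huv.ne hA.1 hW
  -- `G` minus the edge `u — μ u` has no perfect matching, so the matrix at `y = 0` is singular.
  have hc0 : c = 0 := by
    have hsing : (A.updateSkew u (μ u) 0).det = 0 := by
      by_contra hne
      obtain ⟨μ', hμ'⟩ := (hA.updateSkew_zero huv.ne).exists_isMatchingInvolution hne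
      have hμ'u := hμ'.2 u
      rw [huniq μ' (hμ'.mono (G.deleteEdges_le _))] at hμ'u
      exact (deleteEdges_adj.mp hμ'u).2 rfl
    simpa [hc, hW] using hsing
  have hdet := hc (A u (μ u))
  rw [updateSkew_self hA.1, hc0, add_zero] at hdet
  rw [hdet]
  exact mul_ne_zero hW (pow_ne_zero 2 ((hA.2 u (μ u) huv.ne).mpr huv))

end SkewRep

section SkewPatternMatrix

variable {V R S : Type*} [CommRing R] [CommRing S] {G : SimpleGraph V}

/-- Skew-symmetric for every `z`; with `z = X` it is the generic skew matrix with pattern `G`. -/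
noncomputable def skewPatternMatrix (G : SimpleGraph V) (z : V × V → R) : Matrix V V R :=
  of fun i j => if G.Adj i j then z (i, j) - z (j, i) else 0

theorem map_skewPatternMatrix (z : V × V → R) (f : R →+* S) :
    (skewPatternMatrix G z).map f = skewPatternMatrix G (f ∘ z) := by
  ext i j
  simp [skewPatternMatrix, apply_ite f]

theorem deletePair_skewPatternMatrix (z : V × V → R) (u v : V) :
    (skewPatternMatrix G z).deletePair u v =
      skewPatternMatrix (G.induce {u, v}ᶜ) (z ∘ Prod.map (↑) (↑)) :=
  rfl

variable [Fintype V]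

theorem isSkewRep_skewPatternMatrix {z : V × V → ℝ}
    (hz : ∀ i j, i ≠ j → z (i, j) ≠ z (j, i)) : IsSkewRep G (skewPatternMatrix G z) := by
  refine ⟨?_, fun i j hij => ?_⟩
  · ext i j
    by_cases h : G.Adj i j <;> simp [skewPatternMatrix, h, G.adj_comm j i]
  · simp [skewPatternMatrix, sub_ne_zero.mpr (hz i j hij)]

theorem exists_isSkewRep (G : SimpleGraph V) : ∃ A, IsSkewRep G A := by
  obtain ⟨f, hf⟩ := exists_injective_nat V
  exact ⟨_, isSkewRep_skewPatternMatrix (z := fun p => (f p.1 : ℝ))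
    fun i j hij => Nat.cast_injective.ne (hf.ne hij)⟩

variable [DecidableEq V]

theorem det_skewPatternMatrix_ne_zero {μ : V → V} (hμ : G.IsMatchingInvolution μ)
    {f : V → ℝ} (hf : Function.Injective f) :
    (skewPatternMatrix G fun p => if p.2 = μ p.1 then f p.1 else 0).det ≠ 0 := by
  refine det_ne_zero_of_involutive hμ.1 (fun i j hj => ?_) fun i => ?_
  · have hi : i ≠ μ j := fun h => hj (h ▸ (hμ.1 j).symm)
    simp [skewPatternMatrix, hj, hi]
  · simp [skewPatternMatrix, hμ.2 i, hμ.1 i, sub_ne_zero, hf.ne (hμ.ne i).symm]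

theorem det_skewPatternMatrix_X_ne_zero {μ : V → V} (hμ : G.IsMatchingInvolution μ) :
    (skewPatternMatrix G (MvPolynomial.X : V × V → MvPolynomial (V × V) ℝ)).det ≠ 0 := by
  obtain ⟨f, hf⟩ := exists_injective_nat V
  intro h
  apply det_skewPatternMatrix_ne_zero hμ (Nat.cast_injective.comp hf)
  have := congr_arg (MvPolynomial.eval fun p => if p.2 = μ p.1 then ((f p.1 : ℕ) : ℝ) else 0) h
  rw [RingHom.map_det, RingHom.mapMatrix_apply, map_skewPatternMatrix] at this
  simpa [Function.comp_def] using this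

theorem det_deletePair_skewPatternMatrix_X_ne_zero {u v : V}
    {ν : ({u, v}ᶜ : Set V) → ({u, v}ᶜ : Set V)} (hν : (G.induce {u, v}ᶜ).IsMatchingInvolution ν) :
    ((skewPatternMatrix G (MvPolynomial.X : V × V → MvPolynomial (V × V) ℝ)).deletePair u v).det
      ≠ 0 := by
  let r : MvPolynomial (({u, v}ᶜ : Set V) × ({u, v}ᶜ : Set V)) ℝ →+* MvPolynomial (V × V) ℝ :=
    (MvPolynomial.rename (Prod.map Subtype.val Subtype.val)).toRingHom
  have hr : Function.Injective r :=
    MvPolynomial.rename_injective _ (Subtype.val_injective.prodMap Subtype.val_injective)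
  have hrename : (skewPatternMatrix G MvPolynomial.X).deletePair u v =
      (skewPatternMatrix (G.induce {u, v}ᶜ) MvPolynomial.X).map r := by
    rw [deletePair_skewPatternMatrix, map_skewPatternMatrix]
    congr 1
    ext p
    simp [r]
  rw [hrename, ← RingHom.mapMatrix_apply, ← RingHom.map_det]
  exact (map_ne_zero_iff _ hr).mpr (det_skewPatternMatrix_X_ne_zero hν)

theorem exists_isSkewRep_det_ne_zero_and_det_deletePair_ne_zero {u v : V} {μ : V → V}
    {ν : ({u, v}ᶜ : Set V) → ({u, v}ᶜ : Set V)} (hμ : G.IsMatchingInvolution μ)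
    (hν : (G.induce {u, v}ᶜ).IsMatchingInvolution ν) :
    ∃ A, IsSkewRep G A ∧ A.det ≠ 0 ∧ (A.deletePair u v).det ≠ 0 := by
  set P := skewPatternMatrix G (MvPolynomial.X : V × V → MvPolynomial (V × V) ℝ)
  -- At a point `z` off the zero set of `P.det * (P.deletePair u v).det * q`,
  -- `skewPatternMatrix G z` is the required matrix.
  set q : MvPolynomial (V × V) ℝ :=
    ∏ p ∈ Finset.univ.offDiag, (MvPolynomial.X p - MvPolynomial.X p.swap)
  have hq : q ≠ 0 := Finset.prod_ne_zero_iff.mpr fun p hp => sub_ne_zero.mpr <|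
    MvPolynomial.X_injective.ne fun h => (Finset.mem_offDiag.mp hp).2.2 (congr_arg Prod.fst h)
  obtain ⟨z, hz⟩ : ∃ z, MvPolynomial.eval z (P.det * (P.deletePair u v).det * q) ≠ 0 := by
    by_contra! h
    exact mul_ne_zero (mul_ne_zero (det_skewPatternMatrix_X_ne_zero hμ)
      (det_deletePair_skewPatternMatrix_X_ne_zero hν)) hq
      (MvPolynomial.funext fun z => by simpa using h z)
  have hPz : P.map (MvPolynomial.eval z) = skewPatternMatrix G z := by
    rw [map_skewPatternMatrix]
    congr 1
    ext p
    simp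
  simp only [map_mul, RingHom.map_det, RingHom.mapMatrix_apply, deletePair, ← submatrix_map, hPz,
    ne_eq, mul_eq_zero, not_or] at hz
  obtain ⟨⟨hdet, hdetW⟩, hqz⟩ := hz
  refine ⟨_, isSkewRep_skewPatternMatrix fun i j hij => ?_, hdet, hdetW⟩
  simp only [q, map_prod, map_sub, MvPolynomial.eval_X] at hqz
  exact sub_ne_zero.mp (Finset.prod_ne_zero_iff.mp hqz (i, j) (by simpa using hij))

theorem exists_isSkewRep_det_eq_zero_of_ne {μ μ' : V → V}
    (hμ : G.IsMatchingInvolution μ) (hμ' : G.IsMatchingInvolution μ') (hne : μ ≠ μ') :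
    ∃ A, IsSkewRep G A ∧ A.det = 0 := by
  obtain ⟨u, hu⟩ := Function.ne_iff.mp hne
  have huv : G.Adj u (μ' u) := hμ'.2 u
  have hμH : (G.deleteEdges {s(u, μ' u)}).IsMatchingInvolution μ := by
    refine ⟨hμ.1, fun x => deleteEdges_adj.mpr ⟨hμ.2 x, fun h => ?_⟩⟩
    rcases Sym2.eq_iff.mp (Set.mem_singleton_iff.mp h) with ⟨rfl, h⟩ | ⟨rfl, h⟩
    · exact hu h
    · exact hu ((congrArg μ h).symm.trans (hμ.1 _))
  obtain ⟨ν, hν⟩ := hμ'.exists_restrict u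
  have hνH : ((G.deleteEdges {s(u, μ' u)}).induce {u, μ' u}ᶜ).IsMatchingInvolution ν := by
    refine hν.mono fun w w' h => deleteEdges_adj.mpr ⟨h, fun hs => ?_⟩
    obtain ⟨hwu, hwv⟩ := Set.mem_compl_pair_iff.mp w.2
    rcases Sym2.eq_iff.mp (Set.mem_singleton_iff.mp hs) with ⟨h, -⟩ | ⟨h, -⟩
    exacts [hwu h, hwv h]
  obtain ⟨N, hN, hdet, hdetW⟩ :=
    exists_isSkewRep_det_ne_zero_and_det_deletePair_ne_zero hμH hνH
  obtain ⟨c, hc⟩ := exists_det_updateSkew_eq huv.ne hN.1 hdetW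
  have hNuv : N u (μ' u) = 0 := by
    by_contra h
    exact (deleteEdges_adj.mp ((hN.2 _ _ huv.ne).mp h)).2 rfl
  have hc0 : c ≠ 0 := by
    rintro rfl
    have := hc (N u (μ' u))
    rw [updateSkew_self hN.1, hNuv] at this
    simp [hdet] at this
  refine ⟨N.updateSkew u (μ' u) (-c), hN.updateSkew_of_ne_zero huv (neg_ne_zero.mpr hc0), ?_⟩
  simp [hc]

theorem forall_det_ne_zero_iff_existsUnique :
    (∀ A, IsSkewRep G A → A.det ≠ 0) ↔ ∃! μ, G.IsMatchingInvolution μ := by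
  refine ⟨fun h => ?_, fun h A hA => hA.det_ne_zero_of_existsUnique h⟩
  obtain ⟨A, hA⟩ := exists_isSkewRep G
  obtain ⟨μ, hμ⟩ := hA.exists_isMatchingInvolution (h A hA)
  refine ⟨μ, hμ, fun μ' hμ' => by_contra fun hne => ?_⟩
  obtain ⟨B, hB, hdet⟩ := exists_isSkewRep_det_eq_zero_of_ne hμ hμ' (Ne.symm hne)
  exact h B hB hdet

end SkewPatternMatrix

section Rank

variable {V : Type*} [Fintype V] (G : SimpleGraph V)

theorem nonempty_rank_isSkewRep : {r | ∃ A, IsSkewRep G A ∧ A.rank = r}.Nonempty :=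
  let ⟨A, hA⟩ := exists_isSkewRep G
  ⟨A.rank, A, hA, rfl⟩

theorem card_mem_upperBounds_rank_isSkewRep :
    Fintype.card V ∈ upperBounds {r | ∃ A, IsSkewRep G A ∧ A.rank = r} := by
  rintro _ ⟨A, -, rfl⟩
  exact A.rank_le_card_width

theorem minSkewRank_eq_card_iff [DecidableEq V] :
    minSkewRank G = Fintype.card V ↔ ∀ A, IsSkewRep G A → A.det ≠ 0 := by
  refine ⟨fun h A hA => rank_eq_card_iff_det_ne_zero.mp ?_, fun h => ?_⟩
  · exact le_antisymm A.rank_le_card_width (h ▸ Nat.sInf_le ⟨A, hA, rfl⟩)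
  · obtain ⟨A, hA, hrank⟩ := Nat.sInf_mem (nonempty_rank_isSkewRep G)
    exact hrank.symm.trans (rank_eq_card_iff_det_ne_zero.mpr (h A hA))

theorem maxSkewRank_eq_card_iff [DecidableEq V] :
    maxSkewRank G = Fintype.card V ↔ ∃ A, IsSkewRep G A ∧ A.det ≠ 0 := by
  refine ⟨fun h => ?_, fun ⟨A, hA, hdet⟩ => ?_⟩
  · obtain ⟨A, hA, hrank⟩ :=
      Nat.sSup_mem (nonempty_rank_isSkewRep G) ⟨_, card_mem_upperBounds_rank_isSkewRep G⟩
    exact ⟨A, hA, rank_eq_card_iff_det_ne_zero.mp (hrank.trans h)⟩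
  · exact le_antisymm
      (csSup_le (nonempty_rank_isSkewRep G) (card_mem_upperBounds_rank_isSkewRep G))
      (le_csSup ⟨_, card_mem_upperBounds_rank_isSkewRep G⟩
        ⟨A, hA, rank_eq_card_iff_det_ne_zero.mpr hdet⟩)

end Rank

/-- `mr⁻(G) = |G| = MR⁻(G)` if and only if `G` has a unique perfect matching. -/
theorem minSkewRank_eq_card_iff_unique_perfect_matching {V : Type*} [Fintype V]
    (G : SimpleGraph V) :
    (minSkewRank G = Fintype.card V ∧ maxSkewRank G = Fintype.card V) ↔
      (∃! M : G.Subgraph, M.IsPerfectMatching) := by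
  rw [G.existsUnique_isPerfectMatching_iff, ← forall_det_ne_zero_iff_existsUnique,
    minSkewRank_eq_card_iff, maxSkewRank_eq_card_iff]
  refine ⟨And.left, fun h => ⟨h, ?_⟩⟩
  obtain ⟨A, hA⟩ := exists_isSkewRep G
  exact ⟨A, hA, h A hA⟩
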